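/- arXiv:math/0210308 — 4 statements merged into one kernel-verified Lean document; each statement's English description precedes it below -/
import Mathlib

section
/- Let U be a group acting by isometries on an ℝ-tree X, and suppose the action is D-acylindrical for some D ≥ 0. Let y ∈ X with d(y, X_U) = R, where X_U denotes the minimal U-invariant subtree if U has no global fixed point, and the set of points fixed by all of U if U fixes a point. Then for every u ∈ U with u ≠ 1, one has d(y, u·y) ≥ 2R − 2D. -/
open Metric Pointwise

/-- An `ℝ`-tree: a geodesic metric space satisfying the four-point (0-hyperbolicity)
condition; equivalently, every pair of points is joined by a unique arc and that arc
is a geodesic segment. -/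
class IsRTree (X : Type*) [MetricSpace X] : Prop where
  exists_geodesic : ∀ x y : X, ∃ f : ℝ → X, f 0 = x ∧ f (dist x y) = y ∧
    ∀ s ∈ Set.Icc (0 : ℝ) (dist x y), ∀ t ∈ Set.Icc (0 : ℝ) (dist x y),
      dist (f s) (f t) = |s - t|
  fourPoint : ∀ x y z w : X,
    dist x y + dist z w ≤ max (dist x z + dist y w) (dist x w + dist y z)

/-- A `D`-acylindrical action: every `g ≠ 1` has fixed-point set of diameter at most `D`. -/
def IsAcylindrical (G : Type*) (X : Type*) [Group G] [MetricSpace X] [MulAction G X]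
    (D : ℝ) : Prop :=
  ∀ g : G, g ≠ 1 → ∀ x y : X, g • x = x → g • y = y → dist x y ≤ D

/-- A subtree of an ℝ-tree: a nonempty closed connected subset. -/
def IsSubtree {X : Type*} [MetricSpace X] (T : Set X) : Prop :=
  IsClosed T ∧ IsConnected T

/-- `T` is the minimal `U`-invariant subtree of `X`: it is a `U`-invariant subtree
contained in every `U`-invariant subtree. -/
def IsMinimalInvariantSubtree (U : Type*) {X : Type*} [Group U] [MetricSpace X]
    [MulAction U X] (T : Set X) : Prop :=
  (IsSubtree T ∧ ∀ u : U, u • T = T) ∧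
    ∀ T' : Set X, IsSubtree T' → (∀ u : U, u • T' = T') → T ⊆ T'

/-- `Xu` is the set `X_U`: the set of points fixed by all of `U` if `U` fixes a point,
and the minimal `U`-invariant subtree otherwise. -/
def IsXU (U : Type*) {X : Type*} [Group U] [MetricSpace X] [MulAction U X]
    (Xu : Set X) : Prop :=
  ((∃ x : X, ∀ u : U, u • x = x) ∧ Xu = {x : X | ∀ u : U, u • x = x}) ∨
    ((¬ ∃ x : X, ∀ u : U, u • x = x) ∧ IsMinimalInvariantSubtree U Xu)

/-!
Let `p` be the point of `X_U` nearest to `y`; since `X_U` is closed, convex and `U`-invariant,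
`p` is a gate: every geodesic from `y` to `X_U` passes through `p`, and likewise `u • p` is the
gate of `u • y`. The four-point condition applied to `y, u • p, p, u • y` shows that either
`d(y, u • y) ≥ 2R`, or `u` fixes `p`. In the second case the branch point `w` of `y`,
`u • y` and `p` is fixed by `u` as well, so `d(p, w) ≤ D`, and
`d(y, u • y) = 2 d(y, w) = 2R - 2 d(p, w)`.
-/

open Topology

section MetricSpace

variable {X : Type*} [MetricSpace X]

def MetricBtw (a b c : X) : Prop := dist a b + dist b c = dist a c

def MetricConvex (S : Set X) : Prop :=
  ∀ ⦃a⦄, a ∈ S → ∀ ⦃b⦄, b ∈ S → ∀ ⦃c⦄, MetricBtw a c b → c ∈ S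

theorem MetricBtw.symm {a b c : X} (h : MetricBtw a b c) : MetricBtw c b a := by
  unfold MetricBtw at *
  rw [dist_comm c b, dist_comm b a, dist_comm c a]
  linarith

theorem metricBtw_self_iff {a c : X} : MetricBtw a c a ↔ c = a := by
  refine ⟨fun h => ?_, fun h => by simp [h, MetricBtw]⟩
  unfold MetricBtw at h
  rw [dist_self, dist_comm c] at h
  exact (dist_eq_zero.1 (by linarith [dist_nonneg (x := a) (y := c)])).symm

theorem MetricBtw.smul {G : Type*} [Group G] [MulAction G X] [IsIsometricSMul G X]
    (g : G) {a b c : X} (h : MetricBtw a b c) : MetricBtw (g • a) (g • b) (g • c) := by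
  simpa only [MetricBtw, dist_smul] using h

end MetricSpace

section RTree

variable {X : Type*} [MetricSpace X] [IsRTree X]

theorem exists_metricBtw_dist_eq (a c : X) {t : ℝ} (ht₀ : 0 ≤ t) (ht : t ≤ dist a c) :
    ∃ b, MetricBtw a b c ∧ dist a b = t := by
  obtain ⟨f, hf₀, hf, hiso⟩ := IsRTree.exists_geodesic a c
  have h₀ : (0 : ℝ) ∈ Set.Icc 0 (dist a c) := ⟨le_rfl, dist_nonneg⟩
  have hd : dist a c ∈ Set.Icc 0 (dist a c) := ⟨dist_nonneg, le_rfl⟩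
  have hab : dist a (f t) = t := by
    rw [← hf₀, hiso 0 h₀ t ⟨ht₀, ht⟩, zero_sub, abs_neg, abs_of_nonneg ht₀]
  have hbc : dist (f t) c = dist a c - t := by
    rw [← hf, hiso t ⟨ht₀, ht⟩ _ hd, abs_of_nonpos (by linarith), hf]
    ring
  exact ⟨f t, by rw [MetricBtw, hab, hbc]; ring, hab⟩

theorem MetricBtw.dist_eq_sub {a b x x' : X} (h : MetricBtw a x b) (h' : MetricBtw a x' b)
    (hle : dist a x ≤ dist a x') : dist x x' = dist a x' - dist a x := by
  unfold MetricBtw at h h'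
  have h4 := IsRTree.fourPoint a b x x'
  have := dist_triangle a x x'
  rw [dist_comm b x, dist_comm b x'] at h4
  rcases le_max_iff.1 h4 with h₁ | h₁ <;> linarith

theorem MetricBtw.eq_of_dist_eq {a b x x' : X} (h : MetricBtw a x b) (h' : MetricBtw a x' b)
    (hd : dist a x = dist a x') : x = x' :=
  dist_eq_zero.1 <| by rw [h.dist_eq_sub h' hd.le, hd, sub_self]

theorem exists_median (x y z : X) :
    ∃ m, MetricBtw x m y ∧ MetricBtw x m z ∧ MetricBtw y m z := by
  have := dist_triangle x y z
  have := dist_triangle y x z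
  have := dist_triangle x z y
  obtain ⟨m, hxmy, hxm⟩ := exists_metricBtw_dist_eq x y
    (t := (dist x y + dist x z - dist y z) / 2) (by rw [dist_comm y x] at *; linarith) (by linarith)
  -- the branch point sits at distance `(y | z)_x` from `x`
  have hmz : dist m z = dist x z - dist x m := by
    unfold MetricBtw at hxmy
    have h4 := IsRTree.fourPoint m z x y
    have := dist_triangle x m z
    rw [dist_comm m x, dist_comm z y, dist_comm z x] at *
    rcases le_max_iff.1 h4 with h | h <;> linarith
  refine ⟨m, hxmy, by rw [MetricBtw, hmz]; ring, ?_⟩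
  unfold MetricBtw at hxmy ⊢
  rw [hmz, dist_comm y m]
  linarith

theorem MetricBtw.of_dist_lt {a c x z : X} (h : MetricBtw z c a) (hzx : dist z x < dist z c) :
    MetricBtw x c a := by
  unfold MetricBtw at *
  have h4 := IsRTree.fourPoint z a c x
  have := dist_triangle x c a
  rw [dist_comm a x, dist_comm a c, dist_comm c x] at h4
  rcases le_max_iff.1 h4 with h₁ | h₁ <;> linarith [dist_nonneg (x := x) (y := c)]

theorem eventually_metricBtw_iff {a c x : X} (hx : x ≠ c) :
    ∀ᶠ z in 𝓝 x, (MetricBtw z c a ↔ MetricBtw x c a) := by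
  refine Metric.eventually_nhds_iff.2 ⟨dist x c / 2, by simpa using hx, fun z hz => ?_⟩
  have := dist_triangle x z c
  rw [dist_comm] at hz
  exact ⟨fun h => h.of_dist_lt (by rw [dist_comm]; linarith),
    fun h => h.of_dist_lt (by linarith [dist_nonneg (x := x) (y := z)])⟩

/-- `x ↦ MetricBtw x c a` is locally constant off `c`, hence constant on a preconnected set
avoiding `c`; but it holds at `b` and fails at `a`. -/
theorem IsPreconnected.metricConvex {S : Set X} (hS : IsPreconnected S) :
    MetricConvex S := by
  classical
  intro a ha b hb c hc
  by_contra hcS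
  have hcont : ContinuousOn (fun x => decide (MetricBtw x c a)) S := fun x hx => by
    have hxc : x ≠ c := by rintro rfl; exact hcS hx
    refine ((continuousAt_const (y := decide (MetricBtw x c a))).congr ?_).continuousWithinAt
    exact (eventually_metricBtw_iff (a := a) hxc).mono fun z hz => by simp only [hz]
  have := hS.constant hcont hb ha
  simp only [hc.symm, metricBtw_self_iff, decide_true, true_eq_decide_iff] at this
  exact hcS (this ▸ ha)

theorem metricConvex_fixedPoints (G : Type*) [Group G] [MulAction G X] [IsIsometricSMul G X] :
    MetricConvex (MulAction.fixedPoints G X) := by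
  intro a ha b hb c hc g
  have hgc := hc.smul g
  rw [ha g, hb g] at hgc
  exact hgc.eq_of_dist_eq hc (by rw [← dist_smul g a c, ha g])

theorem MetricConvex.exists_dist_eq_infDist {S : Set X} (hconv : MetricConvex S)
    (hne : S.Nonempty) (hS : IsClosed S) (y : X) : ∃ p ∈ S, dist y p = infDist y S := by
  obtain ⟨a, ha⟩ := hne
  obtain ⟨p, hypa, hyp⟩ :=
    exists_metricBtw_dist_eq y a infDist_nonneg (infDist_le_dist_of_mem ha)
  refine ⟨p, ?_, hyp⟩
  rw [← hS.closure_eq, Metric.mem_closure_iff]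
  intro ε hε
  obtain ⟨b, hb, hyb⟩ := (infDist_lt_iff ⟨a, ha⟩).1 (lt_add_of_pos_right (infDist y S) hε)
  -- the branch point of `y, a, b` lies in `S` and on the geodesic from `y` to `a`, beyond `p`
  obtain ⟨m, hyma, hymb, hamb⟩ := exists_median y a b
  have hm : m ∈ S := hconv ha hb hamb
  have hpm := infDist_le_dist_of_mem (x := y) hm
  refine ⟨m, hm, ?_⟩
  rw [hypa.dist_eq_sub hyma (by linarith)]
  linarith [show dist y m + dist m b = dist y b from hymb, dist_nonneg (x := m) (y := b)]

theorem MetricConvex.metricBtw_of_forall_dist_le {S : Set X} (hconv : MetricConvex S)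
    {p y : X} (hp : p ∈ S) (hmin : ∀ x ∈ S, dist y p ≤ dist y x) {x : X} (hx : x ∈ S) :
    MetricBtw y p x := by
  obtain ⟨m, hymp, hymx, hpmx⟩ := exists_median y p x
  have hm : m ∈ S := hconv hp hx hpmx
  have hym : dist y m ≤ dist y p := by
    linarith [show dist y m + dist m p = dist y p from hymp, dist_nonneg (x := m) (y := p)]
  have hmp : m = p :=
    hymp.eq_of_dist_eq (by simp [MetricBtw]) (le_antisymm hym (hmin m hm))
  exact hmp ▸ hymx

theorem MetricConvex.exists_gate {S : Set X} (hconv : MetricConvex S) (hne : S.Nonempty)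
    (hS : IsClosed S) (y : X) :
    ∃ p ∈ S, dist y p = infDist y S ∧ ∀ x ∈ S, MetricBtw y p x := by
  obtain ⟨p, hp, hyp⟩ := hconv.exists_dist_eq_infDist hne hS y
  exact ⟨p, hp, hyp, fun x hx => hconv.metricBtw_of_forall_dist_le hp
    (fun z hz => hyp ▸ infDist_le_dist_of_mem hz) hx⟩

variable {G : Type*} [Group G] [MulAction G X] [IsIsometricSMul G X]

theorem two_mul_dist_le_dist_smul_or_smul_eq {g : G} {y p : X}
    (hgp : MetricBtw y p (g • p)) (hgp' : MetricBtw y p (g⁻¹ • p)) :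
    2 * dist y p ≤ dist y (g • y) ∨ g • p = p := by
  unfold MetricBtw at hgp hgp'
  have hgy : dist (g • y) p = dist y p + dist p (g • p) := by
    rw [← dist_smul g⁻¹, inv_smul_smul, ← hgp', ← dist_smul g p, smul_inv_smul,
      dist_comm (g • p)]
  have h4 := IsRTree.fourPoint y (g • p) p (g • y)
  rw [← hgp, dist_comm p (g • y), hgy, dist_smul, dist_comm (g • p) p, dist_comm p y] at h4
  rcases le_max_iff.1 h4 with h | h
  · exact .inr (dist_le_zero.1 (by linarith)).symm
  · exact .inl (by linarith [dist_nonneg (x := p) (y := g • p)])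

theorem exists_smul_eq_metricBtw_of_smul_eq {g : G} {p : X} (hp : g • p = p) (y : X) :
    ∃ w, g • w = w ∧ MetricBtw p w y ∧ dist y (g • y) = 2 * dist w y := by
  obtain ⟨w, hywgy, hywp, hgywp⟩ := exists_median y (g • y) p
  have hgw : g • w = w := by
    have h := (hywp.smul g).symm
    rw [hp] at h
    exact h.eq_of_dist_eq hgywp.symm (by rw [← hp, dist_smul, hp])
  refine ⟨w, hgw, hywp.symm, ?_⟩
  unfold MetricBtw at hywgy
  rw [← hywgy, ← hgw, dist_smul, hgw, dist_comm y]
  ring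

end RTree

section XU

variable {U X : Type*} [Group U] [MetricSpace X] [MulAction U X] {Xu : Set X}

theorem IsXU.nonempty (h : IsXU U Xu) : Xu.Nonempty := by
  rcases h with ⟨⟨x, hx⟩, rfl⟩ | ⟨-, ⟨⟨-, hconn⟩, -⟩, -⟩
  exacts [⟨x, hx⟩, hconn.nonempty]

theorem IsXU.isClosed [IsIsometricSMul U X] (h : IsXU U Xu) : IsClosed Xu := by
  rcases h with ⟨-, rfl⟩ | ⟨-, ⟨⟨hcl, -⟩, -⟩, -⟩
  · rw [Set.ofPred_forall]
    exact isClosed_iInter fun g => isClosed_eq (continuous_const_smul g) continuous_id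
  · exact hcl

theorem IsXU.metricConvex [IsRTree X] [IsIsometricSMul U X] (h : IsXU U Xu) :
    MetricConvex Xu := by
  rcases h with ⟨-, rfl⟩ | ⟨-, ⟨⟨-, hconn⟩, -⟩, -⟩
  exacts [metricConvex_fixedPoints U, hconn.isPreconnected.metricConvex]

theorem IsXU.smul_mem (h : IsXU U Xu) (g : U) {x : X} (hx : x ∈ Xu) : g • x ∈ Xu := by
  rcases h with ⟨-, rfl⟩ | ⟨-, ⟨⟨-, -⟩, hinv⟩, -⟩
  · rw [hx g]; exact hx
  · exact hinv g ▸ Set.smul_mem_smul_set hx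

end XU

/-- Lemma 3.3(1): if `d(y, X_U) = R` then `d(y, u y) ≥ 2R - 2D` for every `u ≠ 1`. -/
theorem dist_smul_ge_of_acylindrical
    {U : Type*} [Group U] {X : Type*} [MetricSpace X] [IsRTree X]
    [MulAction U X] [IsIsometricSMul U X]
    (D : ℝ) (hD : 0 ≤ D) (hacyl : IsAcylindrical U X D)
    (Xu : Set X) (hXu : IsXU U Xu)
    (y : X) (R : ℝ) (hR : Metric.infDist y Xu = R)
    (u : U) (hu : u ≠ 1) :
    2 * R - 2 * D ≤ dist y (u • y) := by
  obtain ⟨p, hp, hyp, hgate⟩ :=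
    MetricConvex.exists_gate hXu.metricConvex hXu.nonempty hXu.isClosed y
  rw [hR] at hyp
  rcases two_mul_dist_le_dist_smul_or_smul_eq (hgate _ (hXu.smul_mem u hp))
      (hgate _ (hXu.smul_mem u⁻¹ hp)) with hfar | hfix
  · linarith
  · obtain ⟨w, hw, hpwy, hdist⟩ := exists_smul_eq_metricBtw_of_smul_eq hfix y
    have := hacyl u hu p w hfix hw
    unfold MetricBtw at hpwy
    rw [dist_comm] at hyp
    linarith
end

section
/- Let U be a group acting by isometries on an ℝ-tree X, with the action D-acylindrical for some D ≥ 0. Then the set E(U) = { x ∈ X : u·x = x for some u ∈ U with u ≠ 1 } is contained in the closed D-neighborhood of X_U, where X_U denotes the minimal U-invariant subtree if U has no global fixed point, and the set of points fixed by all of U if U fixes a point. -/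
open Metric Pointwise

/-!
If `X_U` is the fixed set of `U`, a point fixed by some `u ≠ 1` is within `D` of any global fixed
point by acylindricity. Otherwise `X_U` is a `U`-invariant subtree; pick `q ∈ X_U`. For `u ≠ 1`
fixing `x`, the geodesics from `x` to `q` and from `x = u x` to `u q` are exchanged by `u` and,
by 0-hyperbolicity, coincide up to the Gromov product `(q | u q)_x`. The point `m` where they
branch is fixed by `u`, so `dist x m ≤ D`, and it lies on the segment `[q, u q] ⊆ X_U`.
-/

section

variable {X : Type*} [MetricSpace X]

def IsGeodesicPath (f : ℝ → X) (x y : X) : Prop :=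
  f 0 = x ∧ f (dist x y) = y ∧
    ∀ s ∈ Set.Icc (0 : ℝ) (dist x y), ∀ t ∈ Set.Icc (0 : ℝ) (dist x y),
      dist (f s) (f t) = |s - t|

namespace IsGeodesicPath

variable {f : ℝ → X} {x y : X} {s : ℝ}

theorem dist_left (hf : IsGeodesicPath f x y) (hs : s ∈ Set.Icc 0 (dist x y)) :
    dist x (f s) = s := by
  rw [← hf.1, hf.2.2 0 ⟨le_rfl, dist_nonneg⟩ s hs, zero_sub, abs_neg, abs_of_nonneg hs.1]

theorem dist_right (hf : IsGeodesicPath f x y) (hs : s ∈ Set.Icc 0 (dist x y)) :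
    dist (f s) y = dist x y - s := by
  conv_lhs => rw [← hf.2.1]
  rw [hf.2.2 s hs _ ⟨dist_nonneg, le_rfl⟩, abs_sub_comm, abs_of_nonneg (sub_nonneg.2 hs.2)]

theorem comp_isometry {φ : X → X} (hφ : Isometry φ) (hf : IsGeodesicPath f x y) :
    IsGeodesicPath (φ ∘ f) (φ x) (φ y) := by
  obtain ⟨h0, h1, hd⟩ := hf
  rw [IsGeodesicPath, hφ.dist_eq]
  exact ⟨by simp [h0], by simp [h1], fun s hs t ht => by simp [hφ.dist_eq, hd s hs t ht]⟩

end IsGeodesicPath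

namespace IsRTree

variable [IsRTree X]

theorem exists_isGeodesicPath (x y : X) : ∃ f : ℝ → X, IsGeodesicPath f x y :=
  exists_geodesic x y

/-- Two geodesics issuing from `x` agree up to the Gromov product of their endpoints. -/
theorem _root_.IsGeodesicPath.apply_eq_of_two_mul_le {f g : ℝ → X} {x q q' : X} {s : ℝ}
    (hf : IsGeodesicPath f x q) (hg : IsGeodesicPath g x q') (hs₀ : 0 ≤ s)
    (hs : 2 * s ≤ dist x q + dist x q' - dist q q') : f s = g s := by
  have hsf : s ∈ Set.Icc 0 (dist x q) := ⟨hs₀, by linarith [dist_triangle x q q']⟩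
  have hsg : s ∈ Set.Icc 0 (dist x q') := ⟨hs₀, by linarith [dist_triangle_right x q q']⟩
  have hxf := hf.dist_left hsf
  have hxg := hg.dist_left hsg
  have hfq := hf.dist_right hsf
  have hgq := hg.dist_right hsg
  have hfq' : dist (f s) q' ≤ dist x q' - s := by
    rcases le_max_iff.mp (fourPoint (f s) q' q x) with h | h
    · rw [dist_comm q' x, dist_comm q x] at h; linarith
    · rw [dist_comm q x, dist_comm (f s) x, dist_comm q' q] at h; linarith
  refine dist_le_zero.mp ?_
  rcases le_max_iff.mp (fourPoint x q' (f s) (g s)) with h | h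
  · rw [dist_comm q' (g s)] at h; linarith
  · rw [dist_comm q' (f s)] at h; linarith

theorem isOpen_setOf_dist_add_dist_le (p q : X) :
    IsOpen {y : X | y ≠ p ∧ dist q p + dist p y ≤ dist q y} := by
  refine Metric.isOpen_iff.2 fun y ⟨hyp, hy⟩ =>
    ⟨dist p y, dist_pos.2 hyp.symm, fun y' hy' => ?_⟩
  rw [Metric.mem_ball] at hy'
  refine ⟨fun h => (h ▸ hy').false, ?_⟩
  rcases le_max_iff.mp (fourPoint q y y' p) with h | h
  · rw [dist_comm y' p, dist_comm y p] at h; linarith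
  · rw [dist_comm y' p, dist_comm y y'] at h; linarith [dist_nonneg (x := p) (y := y')]

theorem mem_of_dist_add_dist_eq {T : Set X} (hT : IsPreconnected T) {q q' p : X}
    (hq : q ∈ T) (hq' : q' ∈ T) (hp : dist q p + dist p q' = dist q q') : p ∈ T := by
  by_cases hpq : p = q
  · exact hpq ▸ hq
  by_contra hpT
  -- `T` would be separated by whether `p` lies on the segment from `q`.
  have hA : IsOpen {y | dist q y < dist q p + dist p y} :=
    isOpen_lt (continuous_const.dist continuous_id)
      (continuous_const.add (continuous_const.dist continuous_id))
  have hqA : dist q q < dist q p + dist p q := by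
    rw [dist_self]
    exact add_pos_of_pos_of_nonneg (dist_pos.2 (Ne.symm hpq)) dist_nonneg
  obtain ⟨y, -, hyA, hyB⟩ := hT _ _ hA (isOpen_setOf_dist_add_dist_le p q)
    (fun y hy => (lt_or_ge (dist q y) _).imp id fun h => ⟨fun hyp => hpT (hyp ▸ hy), h⟩)
    ⟨q, hq, hqA⟩ ⟨q', hq', fun h => hpT (h ▸ hq'), hp.le⟩
  exact hyB.2.not_gt hyA

theorem exists_fixed_dist_add_dist_eq {φ : X → X} (hφ : Isometry φ) {x : X} (hx : φ x = x)
    (q : X) : ∃ m, φ m = m ∧ dist q m + dist m (φ q) = dist q (φ q) := by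
  obtain ⟨f, hf⟩ := exists_isGeodesicPath x q
  have hφf : IsGeodesicPath (φ ∘ f) x (φ q) := hx ▸ hf.comp_isometry hφ
  have hxφq : dist x (φ q) = dist x q := by simpa [hx] using hφ.dist_eq x q
  set s := (2 * dist x q - dist q (φ q)) / 2 with hs_def
  have hs : s ∈ Set.Icc 0 (dist x q) :=
    ⟨by linarith [dist_triangle_left q (φ q) x],
      by linarith [dist_nonneg (x := q) (y := φ q)]⟩
  have hfixed : φ (f s) = f s :=
    (hf.apply_eq_of_two_mul_le hφf hs.1 (by rw [hxφq]; linarith)).symm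
  refine ⟨f s, hfixed, ?_⟩
  have hq : dist q (f s) = dist x q - s := by rw [dist_comm, hf.dist_right hs]
  have hφq : dist (f s) (φ q) = dist q (f s) := by
    conv_lhs => rw [← hfixed]
    rw [hφ.dist_eq, dist_comm]
  rw [hφq, hq]
  linarith

end IsRTree

end

theorem fixedPoints_subset_nbhd_of_minimal_subtree_general
    {U : Type*} [Group U] {X : Type*} [MetricSpace X] [IsRTree X]
    [MulAction U X] [IsIsometricSMul U X]
    (D : ℝ) (hacyl : IsAcylindrical U X D)
    (Xu : Set X) (hXu : IsXU U Xu) :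
    ∀ x : X, (∃ u : U, u ≠ 1 ∧ u • x = x) → Metric.infDist x Xu ≤ D := by
  rintro x ⟨u, hu, hux⟩
  rcases hXu with ⟨⟨p, hp⟩, rfl⟩ | ⟨-, ⟨⟨-, hconn⟩, hinv⟩, -⟩
  · have hpXu : p ∈ {y : X | ∀ v : U, v • y = y} := hp
    exact (infDist_le_dist_of_mem hpXu).trans (hacyl u hu x p hux (hp u))
  · obtain ⟨q, hq⟩ := hconn.nonempty
    have huq : u • q ∈ Xu := hinv u ▸ Set.smul_mem_smul_set hq
    obtain ⟨m, hum, hm⟩ := IsRTree.exists_fixed_dist_add_dist_eq (isometry_smul X u) hux q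
    have hmXu : m ∈ Xu := IsRTree.mem_of_dist_add_dist_eq hconn.isPreconnected hq huq hm
    exact (infDist_le_dist_of_mem hmXu).trans (hacyl u hu x m hux hum)

/-- Lemma 3.3(2), first part: `E(U)` is contained in the closed `D`-neighborhood
of `X_U`. -/
theorem fixedPoints_subset_nbhd_of_minimal_subtree
    {U : Type*} [Group U] {X : Type*} [MetricSpace X] [IsRTree X]
    [MulAction U X] [IsIsometricSMul U X]
    (D : ℝ) (hD : 0 ≤ D) (hacyl : IsAcylindrical U X D)
    (Xu : Set X) (hXu : IsXU U Xu) :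
    ∀ x : X, (∃ u : U, u ≠ 1 ∧ u • x = x) → Metric.infDist x Xu ≤ D :=
  fixedPoints_subset_nbhd_of_minimal_subtree_general D hacyl Xu hXu
end

section
/- Let U be a group acting by isometries on an ℝ-tree X, with the action D-acylindrical for some D ≥ 0. Then the subtrees X(U) and X_U are D-Hausdorff close, i.e. the Hausdorff distance between X(U) and X_U is at most D. Here X_U denotes the minimal U-invariant subtree if U has no global fixed point and the set of points fixed by all of U otherwise, and X(U) denotes the smallest U-invariant subtree of X containing X_U ∪ E(U). -/
open Metric Pointwise

/-- The set `E(U)` of points fixed by some nontrivial element of `U`. -/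
def EU (U : Type*) {X : Type*} [Group U] [MetricSpace X] [MulAction U X] : Set X :=
  {x : X | ∃ u : U, u ≠ 1 ∧ u • x = x}

/-- `T` is the smallest `U`-invariant subtree of `X` containing the set `A`. -/
def IsSmallestInvariantSubtreeContaining (U : Type*) {X : Type*} [Group U]
    [MetricSpace X] [MulAction U X] (A T : Set X) : Prop :=
  (IsSubtree T ∧ (∀ u : U, u • T = T) ∧ A ⊆ T) ∧
    ∀ T' : Set X, IsSubtree T' → (∀ u : U, u • T' = T') → A ⊆ T' → T ⊆ T'

/-! Let `N` be the closed `D`-neighbourhood of `X_U`. In an ℝ-tree every point has a unique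
nearest point on a closed subtree, so if `u ≠ 1` fixes `z`, it also fixes the projection `q` of
`z` to the invariant subtree `X_U`, and acylindricity gives `dist z q ≤ D`. Hence `N` is a
`U`-invariant subtree containing `X_U ∪ E(U)`, so it contains `X(U)` by minimality; the other
inclusion `X_U ⊆ X(U)` holds by definition. -/

open Set

/-- In an ℝ-tree this is the geodesic segment `[x, y]`. -/
def metricSegment {X : Type*} [MetricSpace X] (x y : X) : Set X :=
  {m | dist x m + dist m y = dist x y}

section MetricSegment

variable {X : Type*} [MetricSpace X] {x y m : X}

theorem mem_metricSegment : m ∈ metricSegment x y ↔ dist x m + dist m y = dist x y :=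
  Iff.rfl

theorem left_mem_metricSegment (x y : X) : x ∈ metricSegment x y := by
  simp [metricSegment]

theorem right_mem_metricSegment (x y : X) : y ∈ metricSegment x y := by
  simp [metricSegment]

theorem metricSegment_comm (x y : X) : metricSegment x y = metricSegment y x := by
  ext m
  simp only [mem_metricSegment, dist_comm, add_comm]

theorem mem_metricSegment_of_le (h : dist x m + dist m y ≤ dist x y) : m ∈ metricSegment x y :=
  le_antisymm h (dist_triangle x m y)

theorem dist_left_le_of_mem_metricSegment (hm : m ∈ metricSegment x y) : dist x m ≤ dist x y := by
  have := dist_nonneg (x := m) (y := y)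
  rw [mem_metricSegment] at hm
  linarith

theorem dist_right_le_of_mem_metricSegment (hm : m ∈ metricSegment x y) : dist m y ≤ dist x y := by
  have := dist_nonneg (x := x) (y := m)
  rw [mem_metricSegment] at hm
  linarith

end MetricSegment

section RTree

variable {X : Type*} [MetricSpace X] [IsRTree X]

/-- The four-point condition in terms of (doubled) Gromov products based at `w`. -/
theorem min_gromov_le (x y z w : X) :
    min (dist x w + dist z w - dist x z) (dist z w + dist y w - dist z y)
      ≤ dist x w + dist y w - dist x y := by
  have := dist_comm y z
  rcases le_max_iff.1 (IsRTree.fourPoint x y z w) with h | h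
  · exact (min_le_left _ _).trans (by linarith)
  · exact (min_le_right _ _).trans (by linarith)

theorem eq_of_mem_metricSegment {x y m m' : X} (hm : m ∈ metricSegment x y)
    (hm' : m' ∈ metricSegment x y) (h : dist x m = dist x m') : m = m' := by
  rw [mem_metricSegment] at hm hm'
  have hg := min_gromov_le m m' y x
  have := dist_comm m x
  have := dist_comm m' x
  have := dist_comm y x
  have := dist_comm y m'
  rw [min_eq_left (by linarith)] at hg
  exact dist_le_zero.1 (by linarith)

theorem exists_continuousOn_image_eq_metricSegment (x y : X) :
    ∃ f : ℝ → X, ContinuousOn f (Icc 0 (dist x y)) ∧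
      f '' Icc 0 (dist x y) = metricSegment x y := by
  obtain ⟨f, hf0, hfd, hf⟩ := IsRTree.exists_geodesic x y
  have hleft : ∀ t ∈ Icc 0 (dist x y), dist x (f t) = t := fun t ht => by
    rw [← hf0, hf 0 ⟨le_rfl, dist_nonneg⟩ t ht, zero_sub, abs_neg, abs_of_nonneg ht.1]
  have hseg : ∀ t ∈ Icc 0 (dist x y), f t ∈ metricSegment x y := fun t ht => by
    have := hf t ht _ ⟨dist_nonneg, le_rfl⟩
    rw [hfd, abs_of_nonpos (by linarith [ht.2])] at this
    rw [mem_metricSegment, hleft t ht, this]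
    ring
  refine ⟨f, ?_, Subset.antisymm (image_subset_iff.2 hseg) fun m hm => ?_⟩
  · refine (LipschitzOnWith.of_dist_le_mul (K := 1) fun s hs t ht => ?_).continuousOn
    rw [hf s hs t ht, Real.dist_eq, NNReal.coe_one, one_mul]
  · have ht : dist x m ∈ Icc 0 (dist x y) :=
      ⟨dist_nonneg, dist_left_le_of_mem_metricSegment hm⟩
    exact ⟨dist x m, ht, eq_of_mem_metricSegment (hseg _ ht) hm (hleft _ ht)⟩

theorem isCompact_metricSegment (x y : X) : IsCompact (metricSegment x y) := by
  obtain ⟨f, hf, hfx⟩ := exists_continuousOn_image_eq_metricSegment x y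
  exact hfx ▸ isCompact_Icc.image_of_continuousOn hf

theorem isPreconnected_metricSegment (x y : X) : IsPreconnected (metricSegment x y) := by
  obtain ⟨f, hf, hfx⟩ := exists_continuousOn_image_eq_metricSegment x y
  exact hfx ▸ isPreconnected_Icc.image f hf

theorem exists_mem_metricSegment_dist_eq {x y : X} {t : ℝ} (ht : t ∈ Icc 0 (dist x y)) :
    ∃ m ∈ metricSegment x y, dist x m = t := by
  rw [← dist_self x] at ht
  exact (isPreconnected_metricSegment x y).intermediate_value (left_mem_metricSegment x y)
    (right_mem_metricSegment x y) (continuous_const.dist continuous_id).continuousOn ht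

theorem exists_mem_metricSegment_inter (x y z : X) :
    ∃ c, c ∈ metricSegment x y ∧ c ∈ metricSegment x z ∧ c ∈ metricSegment y z := by
  set s := (dist x y + dist x z - dist y z) / 2 with hs_def
  have hs : s ∈ Icc 0 (dist x z) :=
    ⟨by linarith [dist_triangle y x z, dist_comm x y],
      by linarith [dist_triangle x z y, dist_comm z y]⟩
  obtain ⟨c, hc, hxc⟩ := exists_mem_metricSegment_dist_eq hs
  rw [mem_metricSegment] at hc
  -- the four-point condition at `x` for `y, c, z`, where `(y|z)_x = (z|c)_x = s`
  have hyc : dist y c ≤ dist x y - s := by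
    have hg := min_gromov_le y c z x
    have := dist_comm y x
    have := dist_comm z x
    have := dist_comm c x
    have := dist_comm z c
    rw [min_eq_left (by linarith)] at hg
    linarith
  refine ⟨c, mem_metricSegment_of_le ?_, mem_metricSegment_of_le (by linarith),
    mem_metricSegment_of_le ?_⟩ <;> linarith [dist_comm c y]

/-- Four-point condition at `m`: if `dist z z' < dist z m` then `(z|z')_m > 0`, so `(z'|a)_m > 0`
would force `(z|a)_m > 0`. -/
theorem isOpen_setOf_ne_and_mem_metricSegment (m a : X) :
    IsOpen {z | z ≠ m ∧ m ∈ metricSegment z a} := by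
  rw [Metric.isOpen_iff]
  rintro z ⟨hzm, hz⟩
  refine ⟨dist z m, dist_pos.2 hzm, fun z' hz' => ?_⟩
  rw [mem_ball] at hz'
  refine ⟨fun h => by rw [h, dist_comm] at hz'; exact lt_irrefl _ hz', ?_⟩
  rw [mem_metricSegment] at hz ⊢
  by_contra hz'a
  have hpos : 0 < min (dist z m + dist z' m - dist z z') (dist z' m + dist a m - dist z' a) :=
    lt_min (by linarith [dist_nonneg (x := z') (y := m), dist_comm z z'])
      (by linarith [dist_triangle z' m a, lt_of_le_of_ne (dist_triangle z' m a) (Ne.symm hz'a),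
        dist_comm m a])
  linarith [min_gromov_le z a z' m, dist_comm m a]

theorem IsPreconnected.metricSegment_subset {A : Set X} (hA : IsPreconnected A) {a b : X}
    (ha : a ∈ A) (hb : b ∈ A) : metricSegment a b ⊆ A := by
  intro m hm
  by_contra hmA
  -- otherwise `m` separates `A`, according to whether `[z, a]` passes through `m`
  have hUopen : IsOpen {z | m ∉ metricSegment z a} :=
    (isClosed_eq (by fun_prop) (by fun_prop)).isOpen_compl
  obtain ⟨z, -, hzU, hzV⟩ := hA _ _ hUopen (isOpen_setOf_ne_and_mem_metricSegment m a)
    (fun z hz => by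
      by_cases h : m ∈ metricSegment z a
      exacts [Or.inr ⟨ne_of_mem_of_not_mem hz hmA, h⟩, Or.inl h])
    ⟨a, ha, fun h => hmA (by
      rw [mem_metricSegment, dist_self, dist_comm a m] at h
      rwa [dist_eq_zero.1 (by linarith [dist_nonneg (x := m) (y := a)] : dist m a = 0)])⟩
    ⟨b, hb, ne_of_mem_of_not_mem hb hmA, metricSegment_comm a b ▸ hm⟩
  exact hzU hzV.2

theorem isPreconnected_of_metricSegment_subset {A : Set X}
    (hA : ∀ x ∈ A, ∀ y ∈ A, metricSegment x y ⊆ A) : IsPreconnected A :=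
  isPreconnected_of_forall_pair fun x hx y hy => ⟨_, hA x hx y hy,
    left_mem_metricSegment x y, right_mem_metricSegment x y, isPreconnected_metricSegment x y⟩

/-- Minimise the distance to `x` over the compact set `A ∩ [x, p]`, which meets every segment `[x, b]` with `b ∈ A` (at the centre of the tripod
`x, b, p`). -/
theorem exists_mem_dist_eq_infDist {A : Set X} (hcl : IsClosed A) (hA : IsPreconnected A)
    (hne : A.Nonempty) (x : X) : ∃ q ∈ A, dist x q = infDist x A := by
  obtain ⟨p, hp⟩ := hne
  obtain ⟨q, ⟨-, hqA⟩, hq⟩ := ((isCompact_metricSegment x p).inter_right hcl).exists_isMinOn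
    ⟨p, right_mem_metricSegment x p, hp⟩ (continuous_const.dist continuous_id).continuousOn
  refine ⟨q, hqA, le_antisymm ((le_infDist ⟨p, hp⟩).2 fun b hb => ?_) (infDist_le_dist_of_mem hqA)⟩
  obtain ⟨c, hxb, hxp, hbp⟩ := exists_mem_metricSegment_inter x b p
  calc dist x q ≤ dist x c := hq ⟨hxp, hA.metricSegment_subset hb hp hbp⟩
    _ ≤ dist x b := dist_left_le_of_mem_metricSegment hxb

/-- The centre `c` of the tripod `x, q, q'` lies in `A` and on `[x, q]`, so it is no farther
from `x` than `q`; hence `c = q`, and likewise `c = q'`. -/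
theorem eq_of_dist_eq_infDist {A : Set X} (hA : IsPreconnected A) {x q q' : X} (hq : q ∈ A)
    (hq' : q' ∈ A) (h : dist x q = infDist x A) (h' : dist x q' = infDist x A) : q = q' := by
  obtain ⟨c, hxq, hxq', hqq'⟩ := exists_mem_metricSegment_inter x q q'
  have hc : infDist x A ≤ dist x c := infDist_le_dist_of_mem (hA.metricSegment_subset hq hq' hqq')
  have hcq : c = q := eq_of_mem_metricSegment hxq (right_mem_metricSegment x q)
    (le_antisymm (dist_left_le_of_mem_metricSegment hxq) (h ▸ hc))
  have hcq' : c = q' := eq_of_mem_metricSegment hxq' (right_mem_metricSegment x q')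
    (le_antisymm (dist_left_le_of_mem_metricSegment hxq') (h' ▸ hc))
  exact hcq.symm.trans hcq'

theorem isSubtree_setOf_infDist_le {A : Set X} (hA : IsSubtree A) {r : ℝ} (hr : 0 ≤ r) :
    IsSubtree {z | infDist z A ≤ r} := by
  obtain ⟨hcl, ⟨p, hp⟩, hpre⟩ := hA
  have hpr : infDist p A ≤ r := (infDist_zero_of_mem hp).trans_le hr
  refine ⟨isClosed_le (continuous_infDist_pt A) continuous_const, ⟨p, hpr⟩,
    isPreconnected_of_forall p fun y hy => ?_⟩
  obtain ⟨q, hq, hyq⟩ := exists_mem_dist_eq_infDist hcl hpre ⟨p, hp⟩ y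
  refine ⟨A ∪ metricSegment y q, union_subset (fun z hz => ?_) (fun z hz => ?_), Or.inl hp,
    Or.inr (left_mem_metricSegment y q),
    hpre.union q hq (right_mem_metricSegment y q) (isPreconnected_metricSegment y q)⟩
  · exact (infDist_zero_of_mem hz).trans_le hr
  · calc infDist z A ≤ dist z q := infDist_le_dist_of_mem hq
      _ ≤ dist y q := dist_right_le_of_mem_metricSegment hz
      _ = infDist y A := hyq
      _ ≤ r := hy

theorem Isometry.apply_eq_self_of_mem_metricSegment {f : X → X} (hf : Isometry f)
    {x y m : X} (hx : f x = x) (hy : f y = y) (hm : m ∈ metricSegment x y) : f m = m := by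
  have hxm : dist x (f m) = dist x m := by rw [← hf.dist_eq x m, hx]
  have hmy : dist (f m) y = dist m y := by rw [← hf.dist_eq m y, hy]
  exact eq_of_mem_metricSegment (by rwa [mem_metricSegment, hxm, hmy]) hm hxm

end RTree

theorem isClosed_fixedPoints_of_continuousConstSMul {M α : Type*} [Monoid M] [TopologicalSpace α]
    [T2Space α] [MulAction M α] [ContinuousConstSMul M α] :
    IsClosed (MulAction.fixedPoints M α) := by
  rw [MulAction.fixed_eq_iInter_fixedBy]
  exact isClosed_iInter fun m => isClosed_eq (continuous_const_smul m) continuous_id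

section Action

variable {U X : Type*} [Group U] [MetricSpace X] [MulAction U X]

theorem isPreconnected_fixedPoints [IsRTree X] [IsIsometricSMul U X] :
    IsPreconnected (MulAction.fixedPoints U X) :=
  isPreconnected_of_metricSegment_subset fun _ hx _ hy _ hm u =>
    (isometry_smul X u).apply_eq_self_of_mem_metricSegment (hx u) (hy u) hm

theorem IsXU.smul_eq {Xu : Set X} (h : IsXU U Xu) (u : U) : u • Xu = Xu := by
  rcases h with ⟨-, rfl⟩ | ⟨-, ⟨-, hinv⟩, -⟩
  · rw [← image_smul]
    exact EqOn.image_eq_self fun x hx => hx u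
  · exact hinv u

theorem IsXU.isSubtree [IsRTree X] [IsIsometricSMul U X] {Xu : Set X} (h : IsXU U Xu) :
    IsSubtree Xu := by
  rcases h with ⟨hfix, rfl⟩ | ⟨-, ⟨hsub, -⟩, -⟩
  · exact ⟨isClosed_fixedPoints_of_continuousConstSMul, hfix, isPreconnected_fixedPoints⟩
  · exact hsub

theorem infDist_smul_of_smul_eq [IsIsometricSMul U X] {A : Set X} {u : U} (hA : u • A = A)
    (z : X) : infDist (u • z) A = infDist z A := by
  conv_lhs => rw [← hA, ← image_smul]
  exact infDist_image (isometry_smul X u)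

theorem smul_setOf_infDist_le [IsIsometricSMul U X] {A : Set X} (hA : ∀ u : U, u • A = A)
    (r : ℝ) (u : U) : u • {z | infDist z A ≤ r} = {z | infDist z A ≤ r} := by
  ext z
  rw [mem_smul_set_iff_inv_smul_mem]
  change infDist (u⁻¹ • z) A ≤ r ↔ infDist z A ≤ r
  rw [infDist_smul_of_smul_eq (hA u⁻¹)]

theorem smul_eq_self_of_dist_eq_infDist [IsRTree X] [IsIsometricSMul U X] {A : Set X}
    (hA : IsPreconnected A) {u : U} (hinv : u • A = A) {z q : X} (hz : u • z = z) (hq : q ∈ A)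
    (hzq : dist z q = infDist z A) : u • q = q :=
  eq_of_dist_eq_infDist hA (hinv ▸ smul_mem_smul_set hq) hq
    (by rw [← hzq, ← dist_smul u z q, hz]) hzq

theorem EU_subset_setOf_infDist_le [IsRTree X] [IsIsometricSMul U X] {D : ℝ}
    (hacyl : IsAcylindrical U X D) {A : Set X} (hA : IsSubtree A) (hinv : ∀ u : U, u • A = A) :
    EU U ⊆ {z | infDist z A ≤ D} := by
  rintro z ⟨u, hu, hz⟩
  obtain ⟨q, hq, hzq⟩ := exists_mem_dist_eq_infDist hA.1 hA.2.2 hA.2.1 z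
  show infDist z A ≤ D
  rw [← hzq]
  exact hacyl u hu z q hz (smul_eq_self_of_dist_eq_infDist hA.2.2 (hinv u) hz hq hzq)

end Action

/-- Lemma 3.3(2), second part: `X(U)` and `X_U` are `D`-Hausdorff close. -/
theorem XofU_hausdorff_close_XU
    {U : Type*} [Group U] {X : Type*} [MetricSpace X] [IsRTree X]
    [MulAction U X] [IsIsometricSMul U X]
    (D : ℝ) (hD : 0 ≤ D) (hacyl : IsAcylindrical U X D)
    (Xu : Set X) (hXu : IsXU U Xu)
    (XU' : Set X) (hXU' : IsSmallestInvariantSubtreeContaining U (Xu ∪ EU U) XU') :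
    (∀ x ∈ XU', Metric.infDist x Xu ≤ D) ∧ (∀ x ∈ Xu, Metric.infDist x XU' ≤ D) := by
  obtain ⟨⟨-, -, hXuEU⟩, hmin⟩ := hXU'
  have hXuN : Xu ⊆ {z | infDist z Xu ≤ D} := fun z hz => (infDist_zero_of_mem hz).trans_le hD
  have hEUN := EU_subset_setOf_infDist_le hacyl hXu.isSubtree hXu.smul_eq
  have hXU'N := hmin _ (isSubtree_setOf_infDist_le hXu.isSubtree hD)
    (smul_setOf_infDist_le hXu.smul_eq D) (union_subset hXuN hEUN)
  exact ⟨hXU'N, fun x hx => (infDist_zero_of_mem (hXuEU (Or.inl hx))).trans_le hD⟩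
end

section
/- Let U be a group acting by isometries on an ℝ-tree X and let δ ≥ 0. Then the set E_δ(U) = { x ∈ X : d(u·x, x) ≤ 100δ for some u ∈ U with u ≠ 1 } is contained in the closed 50δ-neighborhood of X(U). More precisely: if x ∈ E_δ(U) and y ∈ X(U) satisfies d(x, y) = d(x, X(U)), then d(x, y) ≤ 50δ. -/
open Metric Pointwise

/-- The set `E_δ(U)` of points moved at most `100δ` by some nontrivial element of `U`. -/
def EdeltaU (U : Type*) {X : Type*} [Group U] [MetricSpace X] [MulAction U X]
    (δ : ℝ) : Set X :=
  {x : X | ∃ u : U, u ≠ 1 ∧ dist (u • x) x ≤ 100 * δ}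

/-!
If `u ≠ 1` moves `x` by at most `100δ`, the midpoint `m` of `[x, u x]` is at distance at most
`50δ` from `x`, and `m` lies in `X(U)`. Indeed, either `u` fixes `m`, so that `m ∈ E(U)`, or
`m, u m, u² m, …` lie in this order on a geodesic (the axis of `u`), with `d(m, uⁿ m)` growing
linearly. In the second case, for any `z ∈ X(U)` and `n` large, the geodesic from `z` to
`u²ⁿ z` passes through `uⁿ m`, because its endpoints are much closer to `m` and `u²ⁿ m` than
these are to `uⁿ m`; since connected subsets of an `ℝ`-tree are convex, `uⁿ m ∈ X(U)`, and
hence `m ∈ X(U)` by invariance.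
-/

namespace RTree

variable {X : Type*} [MetricSpace X]

noncomputable def gromovProduct (w a b : X) : ℝ := (dist w a + dist w b - dist a b) / 2

def Between (a b c : X) : Prop := dist a b + dist b c = dist a c

lemma gromovProduct_nonneg (w a b : X) : 0 ≤ gromovProduct w a b := by
  have := dist_triangle_left a b w
  unfold gromovProduct; linarith

lemma dist_sub_dist_le_gromovProduct (w a b : X) :
    dist w a - dist a b ≤ gromovProduct w a b := by
  have := dist_triangle w b a
  have := dist_comm a b
  unfold gromovProduct; linarith

lemma between_iff_gromovProduct_eq_zero {a b c : X} :
    Between a b c ↔ gromovProduct b a c = 0 := by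
  have := dist_comm a b
  unfold Between gromovProduct
  constructor <;> intro h <;> linarith

lemma Between.symm {a b c : X} (h : Between a b c) : Between c b a := by
  unfold Between at *
  rw [dist_comm c b, dist_comm b a, dist_comm c a]; linarith

lemma Between.gromovProduct_eq {a b c : X} (h : Between a b c) :
    gromovProduct c b a = dist c b := by
  unfold Between at h
  unfold gromovProduct
  rw [dist_comm c a, dist_comm b a, dist_comm c b]; linarith

lemma Between.eq_of_same_ends {a b : X} (h : Between a b a) : b = a := by
  unfold Between at h
  rw [dist_self, dist_comm b a] at h
  exact (dist_eq_zero.mp (by linarith [dist_nonneg (x := a) (y := b)])).symm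

lemma min_gromovProduct_le [IsRTree X] (w a b c : X) :
    min (gromovProduct w a b) (gromovProduct w b c) ≤ gromovProduct w a c := by
  have := dist_comm a w
  have := dist_comm c w
  have := dist_comm b c
  have := dist_comm b w
  unfold gromovProduct
  rcases le_max_iff.mp (IsRTree.fourPoint a c b w) with h | h
  · exact (min_le_left _ _).trans (by linarith)
  · exact (min_le_right _ _).trans (by linarith)

lemma Between.of_gromovProduct_pos [IsRTree X] {a b c b' : X} (h : Between a c b)
    (hb : 0 < gromovProduct c b b') : Between a c b' := by
  rw [between_iff_gromovProduct_eq_zero] at h ⊢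
  have h4 := min_gromovProduct_le c a b' b
  have hb' : gromovProduct c b' b = gromovProduct c b b' := by
    unfold gromovProduct; rw [dist_comm b' b]; ring
  rw [hb', h] at h4
  refine le_antisymm ?_ (gromovProduct_nonneg c a b')
  rcases min_le_iff.mp h4 with h4 | h4
  · exact h4
  · linarith

lemma Between.of_dist_lt [IsRTree X] {a b c b' : X} (h : Between a c b)
    (hb : dist b b' < dist c b) : Between a c b' :=
  h.of_gromovProduct_pos ((sub_pos.mpr hb).trans_le (dist_sub_dist_le_gromovProduct c b b'))

lemma Between.trans_of_ne [IsRTree X] {a b c d : X} (h₁ : Between a b c) (h₂ : Between b c d)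
    (hbc : b ≠ c) : Between a c d := by
  refine (h₂.symm.of_gromovProduct_pos (b' := a) ?_).symm
  rw [h₁.gromovProduct_eq]
  exact dist_pos.mpr hbc.symm

lemma exists_midpoint [IsRTree X] (a b : X) :
    ∃ m : X, Between a m b ∧ dist a m = dist a b / 2 := by
  obtain ⟨f, hf0, hfd, hf⟩ := IsRTree.exists_geodesic a b
  have hd := dist_nonneg (x := a) (y := b)
  have h0 : (0 : ℝ) ∈ Set.Icc 0 (dist a b) := ⟨le_rfl, hd⟩
  have hhalf : dist a b / 2 ∈ Set.Icc 0 (dist a b) := ⟨by linarith, by linarith⟩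
  have hend : dist a b ∈ Set.Icc 0 (dist a b) := ⟨hd, le_rfl⟩
  have ham := hf 0 h0 _ hhalf
  have hmb := hf _ hhalf _ hend
  rw [hf0, zero_sub, abs_neg, abs_of_nonneg (by linarith)] at ham
  rw [hfd, abs_of_nonpos (by linarith)] at hmb
  exact ⟨f (dist a b / 2), by unfold Between; linarith, ham⟩

theorem _root_.IsPreconnected.mem_of_between [IsRTree X] {T : Set X} (hT : IsPreconnected T)
    {a b p : X} (ha : a ∈ T) (hb : b ∈ T) (hp : Between a p b) : p ∈ T := by
  by_contra hpT
  have hbeyond : IsOpen {z : X | Between a p z ∧ p ≠ z} := by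
    refine Metric.isOpen_iff.mpr fun z ⟨hz, hpz⟩ =>
      ⟨dist p z, dist_pos.mpr hpz, fun z' hz' => ?_⟩
    rw [mem_ball, dist_comm] at hz'
    refine ⟨hz.of_dist_lt hz', fun hpz' => ?_⟩
    rw [← hpz', dist_comm] at hz'
    exact lt_irrefl _ hz'
  have hnot : IsOpen {z : X | ¬ Between a p z} :=
    (isClosed_eq (by fun_prop) (by fun_prop)).isOpen_compl
  have hcover : T ⊆ {z | Between a p z ∧ p ≠ z} ∪ {z | ¬ Between a p z} := fun z hz => by
    by_cases h : Between a p z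
    · exact Or.inl ⟨h, fun hpz => hpT (hpz ▸ hz)⟩
    · exact Or.inr h
  obtain ⟨z, -, ⟨hz, -⟩, hz'⟩ := hT _ _ hbeyond hnot hcover
    ⟨b, hb, hp, fun hpb => hpT (hpb ▸ hb)⟩
    ⟨a, ha, fun hpa => hpT (hpa.eq_of_same_ends ▸ ha)⟩
  exact hz' hz

section Action

variable {M : Type*}

lemma Between.smul [SMul M X] [IsIsometricSMul M X] (u : M) {a b c : X} (h : Between a b c) :
    Between (u • a) (u • b) (u • c) := by
  unfold Between at *
  rwa [dist_smul, dist_smul, dist_smul]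

/-- `Between m (u • m) (u • u • m)` says that `m` lies on the axis of `u`. -/
lemma smul_eq_or_between_of_midpoint [SMul M X] [IsIsometricSMul M X] [IsRTree X] (u : M) {x m : X}
    (hm : Between x m (u • x)) (hxm : dist x m = dist x (u • x) / 2) :
    u • m = m ∨ Between m (u • m) (u • u • m) := by
  set d := dist x (u • x)
  set ℓ := dist m (u • m)
  have hmy : dist m (u • x) = d / 2 := by unfold Between at hm; linarith
  have hy₁m₁ : dist (u • x) (u • m) = d / 2 := by rw [dist_smul, hxm]
  have hm₁y₂ : dist (u • m) (u • u • x) = d / 2 := by rw [dist_smul, hmy]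
  have hy₁y₂ : dist (u • x) (u • u • x) = d := dist_smul _ _ _
  have hm₂y₂ : dist (u • u • m) (u • u • x) = d / 2 := by
    rw [dist_smul, dist_comm, hy₁m₁]
  have hm₁m₂ : dist (u • m) (u • u • m) = ℓ := dist_smul _ _ _
  by_cases hℓ : ℓ = 0
  · exact Or.inl (dist_eq_zero.mp hℓ).symm
  have hℓpos : 0 < ℓ := lt_of_le_of_ne dist_nonneg (Ne.symm hℓ)
  right
  -- Four-point condition at `u x`: `ℓ ≤ d(x, u² x) - d`; the triangle inequality gives `≥`.
  have hupper : ℓ ≤ dist x (u • u • x) - d := by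
    have h₁ := min_gromovProduct_le (u • x) m x (u • m)
    have h₂ := min_gromovProduct_le (u • x) x (u • u • x) (u • m)
    unfold gromovProduct at h₁ h₂
    rw [dist_comm (u • x) m, dist_comm (u • x) x, dist_comm m x, hmy, hxm, hy₁m₁]
      at h₁
    rw [dist_comm (u • x) x, hy₁y₂, hy₁m₁, dist_comm (u • u • x) (u • m), hm₁y₂]
      at h₂
    rcases min_le_iff.mp h₁ with h₁ | h₁ <;> rcases min_le_iff.mp h₂ with h₂ | h₂ <;>
      linarith
  have hbetween : Between m (u • m) (u • u • x) := by
    have := dist_triangle x m (u • u • x)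
    have := dist_triangle m (u • m) (u • u • x)
    unfold Between
    linarith
  refine hbetween.of_gromovProduct_pos ?_
  unfold gromovProduct
  rw [hm₁y₂, hm₁m₂, dist_comm, hm₂y₂]
  linarith

variable [IsRTree X] {m : X}

section Monoid

variable [Monoid M] [MulAction M X] [IsIsometricSMul M X] {u : M}

lemma between_pow_smul (h : Between m (u • m) (u • u • m)) (hum : u • m ≠ m) (n : ℕ) :
    Between m (u ^ n • m) (u ^ (n + 1) • m) := by
  induction n with
  | zero => simp [Between]
  | succ n ih =>
    have hstep : Between (u ^ n • m) (u ^ (n + 1) • m) (u ^ (n + 2) • m) := by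
      simpa only [pow_succ, mul_smul] using h.smul (u ^ n)
    refine ih.trans_of_ne hstep ?_
    rw [← dist_pos, pow_succ, mul_smul, dist_smul]
    exact dist_pos.mpr hum.symm

lemma dist_pow_smul (h : Between m (u • m) (u • u • m)) (hum : u • m ≠ m) (n : ℕ) :
    dist m (u ^ n • m) = n * dist m (u • m) := by
  induction n with
  | zero => simp
  | succ n ih =>
    have hstep : dist (u ^ n • m) (u ^ (n + 1) • m) = dist m (u • m) := by
      rw [pow_succ, mul_smul, dist_smul]
    rw [← between_pow_smul h hum n, ih, hstep]
    push_cast; ring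

end Monoid

variable {U : Type*} [Group U] [MulAction U X] [IsIsometricSMul U X] {u : U}

lemma mem_of_between_smul {T : Set X} (hT : IsConnected T) (hinv : ∀ g : U, g • T = T)
    (h : Between m (u • m) (u • u • m)) (hum : u • m ≠ m) : m ∈ T := by
  have hsmul_mem : ∀ g : U, ∀ y ∈ T, g • y ∈ T := fun g _ hy =>
    hinv g ▸ Set.smul_mem_smul_set hy
  obtain ⟨z, hz⟩ := hT.nonempty
  obtain ⟨n, hn⟩ := exists_nat_gt (dist m z / dist m (u • m))
  rw [div_lt_iff₀ (dist_pos.mpr (Ne.symm hum))] at hn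
  have hdn := dist_pow_smul h hum n
  have hdn' : dist (u ^ n • m) (u ^ n • u ^ n • m) = n * dist m (u • m) := by
    rw [dist_smul, hdn]
  have haxis : Between m (u ^ n • m) (u ^ n • u ^ n • m) := by
    unfold Between
    rw [hdn, hdn', ← mul_smul, ← pow_add, dist_pow_smul h hum]
    push_cast; ring
  have hgeod : Between z (u ^ n • m) (u ^ n • u ^ n • z) := by
    refine (haxis.symm.of_dist_lt ?_).symm.of_dist_lt ?_
    · rwa [dist_comm (u ^ n • m), hdn]
    · rwa [dist_smul, dist_smul, hdn']
  have hmem : u ^ n • m ∈ T :=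
    hT.isPreconnected.mem_of_between hz (hsmul_mem _ _ (hsmul_mem _ _ hz)) hgeod
  rwa [← hinv (u ^ n), Set.smul_mem_smul_set_iff] at hmem

lemma midpoint_mem_or_smul_eq {T : Set X} (hT : IsConnected T) (hinv : ∀ g : U, g • T = T)
    (u : U) {x m : X} (hm : Between x m (u • x)) (hxm : dist x m = dist x (u • x) / 2) :
    m ∈ T ∨ u • m = m := by
  by_cases hum : u • m = m
  · exact Or.inr hum
  exact Or.inl <| mem_of_between_smul hT hinv
    ((smul_eq_or_between_of_midpoint u hm hxm).resolve_left hum) hum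

end Action

end RTree

open RTree in
theorem Edelta_subset_nbhd_XofU_general
    {U : Type*} [Group U] {X : Type*} [MetricSpace X] [IsRTree X]
    [MulAction U X] [IsIsometricSMul U X]
    (δ : ℝ)
    (Xu : Set X)
    (XU' : Set X) (hXU' : IsSmallestInvariantSubtreeContaining U (Xu ∪ EU U) XU') :
    (∀ x ∈ EdeltaU U (X := X) δ, Metric.infDist x XU' ≤ 50 * δ) ∧
      ∀ x ∈ EdeltaU U (X := X) δ, ∀ y ∈ XU',
        dist x y = Metric.infDist x XU' → dist x y ≤ 50 * δ := by
  obtain ⟨⟨⟨-, hconn⟩, hinv, hsub⟩, -⟩ := hXU'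
  have hnear : ∀ x ∈ EdeltaU U (X := X) δ, infDist x XU' ≤ 50 * δ := by
    rintro x ⟨u, hu, hux⟩
    obtain ⟨m, hm, hxm⟩ := exists_midpoint x (u • x)
    have hmT : m ∈ XU' :=
      (midpoint_mem_or_smul_eq hconn hinv u hm hxm).elim id fun h => hsub (Or.inr ⟨u, hu, h⟩)
    calc infDist x XU' ≤ dist x m := infDist_le_dist_of_mem hmT
      _ = dist (u • x) x / 2 := by rw [hxm, dist_comm]
      _ ≤ 50 * δ := by linarith
  exact ⟨hnear, fun x hx y _ hxy => hxy ▸ hnear x hx⟩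

/-- `E_δ(U)` is contained in the closed `50δ`-neighborhood of `X(U)`; more precisely,
a nearest point of `X(U)` to a point of `E_δ(U)` is at distance at most `50δ`. -/
theorem Edelta_subset_nbhd_XofU
    {U : Type*} [Group U] {X : Type*} [MetricSpace X] [IsRTree X]
    [MulAction U X] [IsIsometricSMul U X]
    (δ : ℝ) (hδ : 0 ≤ δ)
    (Xu : Set X) (hXu : IsXU U Xu)
    (XU' : Set X) (hXU' : IsSmallestInvariantSubtreeContaining U (Xu ∪ EU U) XU') :
    (∀ x ∈ EdeltaU U (X := X) δ, Metric.infDist x XU' ≤ 50 * δ) ∧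
      ∀ x ∈ EdeltaU U (X := X) δ, ∀ y ∈ XU',
        dist x y = Metric.infDist x XU' → dist x y ≤ 50 * δ :=
  Edelta_subset_nbhd_XofU_general δ Xu XU' hXU'
end
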